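/- Assume the CFL condition 0 ≤ λL ≤ 1. Let w : ℤ → ℝ be bounded. Then for every constant c ∈ ℝ and every i ∈ ℤ, the scheme satisfies the discrete entropy inequality |G(w)_i − c| ≤ |w_i − c| + λ Σ_{j≥i} I_{j−i} ( Q_c(w_{j+1}) − Q_c(w_j) ), where Q_c(w) = |W(w) − W(c)|. -/

import Mathlib

/-!
Under the CFL condition the scheme is monotone. After Abel summation, `G(v)_i - G(u)_i` is
`v_i - u_i` plus the nonnegative terms `λ (I_k - I_{k+1}) (W(v_{i+k+1}) - W(u_{i+k+1}))` minus
`λ I₀ (W(v_i) - W(u_i)) ≤ λ L I₀ (v_i - u_i)`; here `I_k` decreases because `Φ` does, and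
`I₀ ≤ ∫ Φ_α = 1`. The entropy inequality then follows by the Crandall–Majda argument: the scheme
fixes constants, so monotonicity applied to `w ∧ c ≤ w, c ≤ w ∨ c` bounds `|G(w)_i - c|` by
`G(w ∨ c)_i - G(w ∧ c)_i`, and `W(w ∨ c) - W(w ∧ c) = |W(w) - W(c)|` as `W` is non-decreasing.
-/

open MeasureTheory

/-- One step of the filtered scheme:
`G(w)_i = w_i + λ Σ_{j ≥ i} I_{j-i} (W(w_{j+1}) - W(w_j))`. -/
noncomputable def schemeStep (I : ℕ → ℝ) (W : ℝ → ℝ) (lam : ℝ) (w : ℤ → ℝ) (i : ℤ) : ℝ :=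
  w i + lam * ∑' k : ℕ, I k * (W (w (i + (k : ℤ) + 1)) - W (w (i + (k : ℤ))))

open Set

noncomputable def cellIntegral (f : ℝ → ℝ) (h : ℝ) (k : ℕ) : ℝ :=
  ∫ ζ in (k * h)..((k + 1) * h), f ζ

section Kernel

variable {f : ℝ → ℝ} {h : ℝ}

lemma AntitoneOn.intervalIntegrable_of_nonneg (hf : AntitoneOn f (Ici 0)) {a b : ℝ}
    (ha : 0 ≤ a) (hb : 0 ≤ b) : IntervalIntegrable f volume a b :=
  (hf.mono fun _ hx => (le_min ha hb).trans hx.1).intervalIntegrable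

lemma cellIntegral_nonneg (hf : ∀ x, 0 ≤ x → 0 ≤ f x) (hh : 0 ≤ h) (k : ℕ) :
    0 ≤ cellIntegral f h k :=
  intervalIntegral.integral_nonneg (by nlinarith) fun x hx =>
    hf x ((by positivity : (0 : ℝ) ≤ k * h).trans hx.1)

lemma cellIntegral_antitone (hf : AntitoneOn f (Ici 0)) (hh : 0 ≤ h) :
    Antitone (cellIntegral f h) := by
  refine antitone_nat_of_succ_le fun k => ?_
  have hk : (0 : ℝ) ≤ k * h := by positivity
  have hshift : cellIntegral f h (k + 1) = ∫ ζ in (k * h)..((k + 1) * h), f (ζ + h) := by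
    rw [intervalIntegral.integral_comp_add_right, cellIntegral]
    congr 1 <;> push_cast <;> ring
  have hf_shift : AntitoneOn (fun x => f (x + h)) (Ici 0) := fun x hx y hy hxy =>
    hf (mem_Ici.2 (add_nonneg hx hh)) (mem_Ici.2 (add_nonneg hy hh)) (by linarith)
  rw [hshift, cellIntegral]
  refine intervalIntegral.integral_mono_on (by nlinarith)
    (hf_shift.intervalIntegrable_of_nonneg hk (by positivity))
    (hf.intervalIntegrable_of_nonneg hk (by positivity)) fun x hx => ?_
  exact hf (mem_Ici.2 (hk.trans hx.1)) (mem_Ici.2 (by linarith [hx.1])) (by linarith)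

lemma sum_range_cellIntegral (hf : AntitoneOn f (Ici 0)) (hh : 0 ≤ h) (N : ℕ) :
    ∑ k ∈ Finset.range N, cellIntegral f h k = ∫ ζ in (0 : ℝ)..(N * h), f ζ := by
  have hadj := intervalIntegral.sum_integral_adjacent_intervals (a := fun k : ℕ => (k : ℝ) * h)
    (n := N) (f := f) (μ := volume) fun k _ =>
      hf.intervalIntegrable_of_nonneg (by positivity) (by positivity)
  simp only [Nat.cast_zero, zero_mul, Nat.cast_add, Nat.cast_one] at hadj
  exact hadj

lemma sum_range_cellIntegral_le (hf : AntitoneOn f (Ici 0)) (hf0 : ∀ x, 0 ≤ x → 0 ≤ f x)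
    (hfi : IntegrableOn f (Ioi 0)) (hh : 0 ≤ h) (N : ℕ) :
    ∑ k ∈ Finset.range N, cellIntegral f h k ≤ ∫ ζ in Ioi 0, f ζ := by
  rw [sum_range_cellIntegral hf hh, intervalIntegral.integral_of_le (by positivity)]
  refine setIntegral_mono_set hfi ?_ Ioc_subset_Ioi_self.eventuallyLE
  filter_upwards [ae_restrict_mem measurableSet_Ioi] with x hx using hf0 x (le_of_lt hx)

lemma summable_cellIntegral (hf : AntitoneOn f (Ici 0)) (hf0 : ∀ x, 0 ≤ x → 0 ≤ f x)
    (hfi : IntegrableOn f (Ioi 0)) (hh : 0 ≤ h) : Summable (cellIntegral f h) :=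
  summable_of_sum_range_le (cellIntegral_nonneg hf0 hh) (sum_range_cellIntegral_le hf hf0 hfi hh)

end Kernel

section Rescale

variable {Φ : ℝ → ℝ} {α : ℝ}

lemma AntitoneOn.rescale (hΦ : AntitoneOn Φ (Ici 0)) (hα : 0 < α) :
    AntitoneOn (fun ζ => (1 / α) * Φ (ζ / α)) (Ici 0) := fun x hx y hy hxy =>
  mul_le_mul_of_nonneg_left
    (hΦ (mem_Ici.2 (div_nonneg hx hα.le)) (mem_Ici.2 (div_nonneg hy hα.le)) (by gcongr))
    (by positivity)

lemma IntegrableOn.rescale (hΦ : IntegrableOn Φ (Ioi 0)) (hα : 0 < α) :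
    IntegrableOn (fun ζ => (1 / α) * Φ (ζ / α)) (Ioi 0) := by
  have hcomp : IntegrableOn (fun ζ => Φ (α⁻¹ * ζ)) (Ioi 0) := by
    rwa [integrableOn_Ioi_comp_mul_left_iff Φ 0 (inv_pos.2 hα), mul_zero]
  simpa only [div_eq_inv_mul, IntegrableOn] using hcomp.const_mul (1 / α)

lemma integral_Ioi_rescale (hα : 0 < α) :
    ∫ ζ in Ioi 0, (1 / α) * Φ (ζ / α) = ∫ ζ in Ioi 0, Φ ζ := by
  simp only [div_eq_inv_mul, integral_const_mul,
    integral_comp_mul_left_Ioi Φ 0 (inv_pos.2 hα), mul_zero, inv_inv, smul_eq_mul]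
  field_simp

end Rescale

section Scheme

variable {I : ℕ → ℝ} {W : ℝ → ℝ} {lam L : ℝ}

lemma summable_mul_of_abs_le {x : ℕ → ℝ} {C : ℝ} (hI0 : ∀ k, 0 ≤ I k) (hI : Summable I)
    (hx : ∀ k, |x k| ≤ C) : Summable fun k => I k * x k :=
  Summable.of_norm_bounded (hI.mul_right C) fun k => by
    rw [Real.norm_eq_abs, abs_mul, abs_of_nonneg (hI0 k)]
    exact mul_le_mul_of_nonneg_left (hx k) (hI0 k)

lemma neg_mul_le_tsum_mul_sub_of_antitone {d : ℕ → ℝ} (hI0 : ∀ k, 0 ≤ I k) (hI : Antitone I)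
    (hd : ∀ k, 0 ≤ d k) (hs : Summable fun k => I k * (d (k + 1) - d k)) :
    -(I 0 * d 0) ≤ ∑' k, I k * (d (k + 1) - d k) := by
  -- the partial sums equal `-I₀d₀ + I_N d_N + ∑_{k<N} (I_k - I_{k+1}) d_{k+1}`
  have hpartial : ∀ N, -(I 0 * d 0) + I N * d N ≤
      ∑ k ∈ Finset.range N, I k * (d (k + 1) - d k) := by
    intro N
    induction N with
    | zero => simp
    | succ N ih =>
      rw [Finset.sum_range_succ]
      nlinarith [mul_nonneg (sub_nonneg.2 (hI N.le_succ)) (hd (N + 1))]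
  refine ge_of_tendsto' hs.hasSum.tendsto_sum_nat fun N => ?_
  nlinarith [hpartial N, mul_nonneg (hI0 N) (hd N)]

lemma abs_sub_le_of_monotone (hW : Monotone W) {M a b : ℝ} (ha : |a| ≤ M) (hb : |b| ≤ M) :
    |W a - W b| ≤ W M - W (-M) := by
  rw [abs_le] at ha hb ⊢
  have := hW ha.1; have := hW ha.2; have := hW hb.1; have := hW hb.2
  constructor <;> linarith

lemma summable_schemeStep_series (hI0 : ∀ k, 0 ≤ I k) (hI : Summable I) (hW : Monotone W)
    {u : ℤ → ℝ} {M : ℝ} (hu : ∀ j, |u j| ≤ M) (i : ℤ) :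
    Summable fun k : ℕ => I k * (W (u (i + k + 1)) - W (u (i + k))) :=
  summable_mul_of_abs_le hI0 hI fun _ => abs_sub_le_of_monotone hW (hu _) (hu _)

lemma schemeStep_sub_schemeStep (hI0 : ∀ k, 0 ≤ I k) (hI : Summable I) (hW : Monotone W)
    {u v : ℤ → ℝ} {M : ℝ} (hu : ∀ j, |u j| ≤ M) (hv : ∀ j, |v j| ≤ M) (i : ℤ) :
    schemeStep I W lam v i - schemeStep I W lam u i = v i - u i + lam * ∑' k : ℕ, I k *
      ((W (v (i + k + 1)) - W (u (i + k + 1))) - (W (v (i + k)) - W (u (i + k)))) := by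
  have hsub := (summable_schemeStep_series hI0 hI hW hv i).tsum_sub
    (summable_schemeStep_series hI0 hI hW hu i)
  calc schemeStep I W lam v i - schemeStep I W lam u i
      = v i - u i + lam * ((∑' k : ℕ, I k * (W (v (i + k + 1)) - W (v (i + k))))
          - ∑' k : ℕ, I k * (W (u (i + k + 1)) - W (u (i + k)))) := by
        simp only [schemeStep]; ring
    _ = _ := by
        rw [← hsub]
        congr 2
        exact tsum_congr fun k => by ring

theorem schemeStep_mono (hI0 : ∀ k, 0 ≤ I k) (hIanti : Antitone I) (hI : Summable I)
    (hI1 : I 0 ≤ 1) (hW : Monotone W) (hWL : ∀ ⦃a b⦄, a ≤ b → W b - W a ≤ L * (b - a))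
    (hlam : 0 ≤ lam) (hCFL : lam * L ≤ 1) {u v : ℤ → ℝ} {M : ℝ} (hu : ∀ j, |u j| ≤ M)
    (hv : ∀ j, |v j| ≤ M) (huv : ∀ j, u j ≤ v j) (i : ℤ) :
    schemeStep I W lam u i ≤ schemeStep I W lam v i := by
  set d : ℕ → ℝ := fun k => W (v (i + k)) - W (u (i + k)) with hd
  have hd0 : ∀ k, 0 ≤ d k := fun k => sub_nonneg.2 (hW (huv _))
  have hterm : ∀ k : ℕ, I k * ((W (v (i + k + 1)) - W (u (i + k + 1))) -
      (W (v (i + k)) - W (u (i + k)))) = I k * (d (k + 1) - d k) := by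
    intro k
    simp only [hd, Nat.cast_add, Nat.cast_one, add_assoc]
  have hdiff := schemeStep_sub_schemeStep (lam := lam) hI0 hI hW hu hv i
  rw [tsum_congr hterm] at hdiff
  have hs : Summable fun k => I k * (d (k + 1) - d k) :=
    ((summable_schemeStep_series hI0 hI hW hv i).sub
      (summable_schemeStep_series hI0 hI hW hu i)).congr fun k => by rw [← hterm]; ring
  have habel := mul_le_mul_of_nonneg_left (neg_mul_le_tsum_mul_sub_of_antitone hI0 hIanti hd0 hs)
    hlam
  have hd_zero : d 0 ≤ L * (v i - u i) := by simpa [hd] using hWL (huv i)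
  have hloss : lam * (I 0 * d 0) ≤ v i - u i := by
    have hvu : 0 ≤ v i - u i := sub_nonneg.2 (huv i)
    calc lam * (I 0 * d 0) ≤ I 0 * (lam * L) * (v i - u i) := by
          nlinarith [mul_le_mul_of_nonneg_left hd_zero (mul_nonneg hlam (hI0 0))]
      _ ≤ 1 * (v i - u i) := mul_le_mul_of_nonneg_right
          (by nlinarith [mul_le_mul_of_nonneg_left hCFL (hI0 0)]) hvu
      _ = v i - u i := one_mul _
  linarith

lemma schemeStep_const (c : ℝ) (i : ℤ) : schemeStep I W lam (fun _ => c) i = c := by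
  simp [schemeStep]

theorem abs_schemeStep_sub_le (hI0 : ∀ k, 0 ≤ I k) (hIanti : Antitone I) (hI : Summable I)
    (hI1 : I 0 ≤ 1) (hW : Monotone W) (hWL : ∀ ⦃a b⦄, a ≤ b → W b - W a ≤ L * (b - a))
    (hlam : 0 ≤ lam) (hCFL : lam * L ≤ 1) {w : ℤ → ℝ} {M : ℝ} (hw : ∀ j, |w j| ≤ M)
    (c : ℝ) (i : ℤ) :
    |schemeStep I W lam w i - c| ≤ |w i - c| + lam * ∑' k : ℕ, I k *
      (|W (w (i + k + 1)) - W c| - |W (w (i + k)) - W c|) := by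
  set M' := max M |c|
  have hw' : ∀ j, |w j| ≤ M' := fun j => (hw j).trans (le_max_left _ _)
  have hc : ∀ j : ℤ, |(fun _ => c) j| ≤ M' := fun _ => le_max_right _ _
  have hmin : ∀ j, |min (w j) c| ≤ M' := fun j =>
    abs_min_le_max_abs_abs.trans (max_le_max (hw j) le_rfl)
  have hmax : ∀ j, |max (w j) c| ≤ M' := fun j =>
    abs_max_le_max_abs_abs.trans (max_le_max (hw j) le_rfl)
  have mono {u v : ℤ → ℝ} (hu : ∀ j, |u j| ≤ M') (hv : ∀ j, |v j| ≤ M')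
      (huv : ∀ j, u j ≤ v j) := schemeStep_mono hI0 hIanti hI hI1 hW hWL hlam hCFL hu hv huv i
  have h1 := mono hmin hw' fun j => min_le_left _ _
  have h2 := mono hw' hmax fun j => le_max_left _ _
  have h3 := mono hmin hc fun j => min_le_right _ _
  have h4 := mono hc hmax fun j => le_max_right _ _
  rw [schemeStep_const] at h3 h4
  have hQ : ∀ a, W (max a c) - W (min a c) = |W a - W c| := fun a => by
    rw [hW.map_max, hW.map_min, max_sub_min_eq_abs']
  have hdiff := schemeStep_sub_schemeStep (lam := lam) hI0 hI hW hmin hmax i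
  simp only [hQ, max_sub_min_eq_abs'] at hdiff
  rw [abs_le]
  constructor <;> linarith

end Scheme

theorem stmt_7_general
    (Φ : ℝ → ℝ) (α Δz Δt lam L : ℝ)
    (hα : 0 < α) (hΔz : 0 < Δz) (hΔt : 0 < Δt) (hlam : lam = Δt / Δz)
    (hΦnonneg : ∀ z : ℝ, 0 ≤ z → 0 ≤ Φ z)
    (hΦmono : ∀ x y : ℝ, 0 ≤ x → x ≤ y → Φ y ≤ Φ x)
    (hΦmass : ∫ ζ in Set.Ioi (0:ℝ), Φ ζ = 1)
    (W : ℝ → ℝ) (hW : Differentiable ℝ W)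
    (hW' : ∀ x : ℝ, 0 ≤ deriv W x ∧ deriv W x ≤ L)
    (hCFL : 0 ≤ lam * L ∧ lam * L ≤ 1)
    (I : ℕ → ℝ)
    (hI : ∀ k : ℕ, I k = ∫ ζ in ((k : ℝ) * Δz)..(((k : ℝ) + 1) * Δz), (1/α) * Φ (ζ/α))
    (w : ℤ → ℝ) (hwB : ∃ M, ∀ i, |w i| ≤ M) :
    ∀ c : ℝ, ∀ i : ℤ,
      |schemeStep I W lam w i - c| ≤
        |w i - c| + lam * ∑' k : ℕ, I k *
          (|W (w (i + (k : ℤ) + 1)) - W c| - |W (w (i + (k : ℤ))) - W c|) := by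
  intro c i
  obtain ⟨M, hM⟩ := hwB
  set f : ℝ → ℝ := fun ζ => (1 / α) * Φ (ζ / α)
  have hf0 : ∀ x, 0 ≤ x → 0 ≤ f x := fun x hx =>
    mul_nonneg (by positivity) (hΦnonneg _ (div_nonneg hx hα.le))
  have hfanti : AntitoneOn f (Ici 0) :=
    AntitoneOn.rescale (fun x hx y _ hxy => hΦmono x y hx hxy) hα
  have hfi : IntegrableOn f (Ioi 0) :=
    IntegrableOn.rescale (integrable_of_integral_eq_one hΦmass) hα
  have hfmass : ∫ ζ in Ioi 0, f ζ = 1 := (integral_Ioi_rescale hα).trans hΦmass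
  obtain rfl : I = cellIntegral f Δz := funext hI
  have hI1 : cellIntegral f Δz 0 ≤ 1 := by
    simpa [hfmass] using sum_range_cellIntegral_le hfanti hf0 hfi hΔz.le 1
  exact abs_schemeStep_sub_le (cellIntegral_nonneg hf0 hΔz.le)
    (cellIntegral_antitone hfanti hΔz.le) (summable_cellIntegral hfanti hf0 hfi hΔz.le) hI1
    (monotone_of_deriv_nonneg hW fun x => (hW' x).1)
    (image_sub_le_mul_sub_of_deriv_le hW fun x => (hW' x).2)
    (hlam ▸ (div_pos hΔt hΔz).le) hCFL.2 hM c i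

/-- under the CFL condition `0 ≤ λL ≤ 1`, the filtered scheme
satisfies the discrete Kružkov entropy inequality
`|G(w)_i − c| ≤ |w_i − c| + λ Σ_{j≥i} I_{j−i} (Q_c(w_{j+1}) − Q_c(w_j))`
with `Q_c(w) = |W(w) − W(c)|`. -/
theorem stmt_7
    (Φ : ℝ → ℝ) (α Δz Δt lam L : ℝ)
    (hα : 0 < α) (hΔz : 0 < Δz) (hΔt : 0 < Δt) (hlam : lam = Δt / Δz)
    (hΦnonneg : ∀ z : ℝ, 0 ≤ z → 0 ≤ Φ z)
    (hΦmono : ∀ x y : ℝ, 0 ≤ x → x ≤ y → Φ y ≤ Φ x)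
    (hΦmass : ∫ ζ in Set.Ioi (0:ℝ), Φ ζ = 1)
    (hΦmom : IntegrableOn (fun ζ => ζ * Φ ζ) (Set.Ioi (0:ℝ)))
    (W : ℝ → ℝ) (hW : Differentiable ℝ W)
    (hW' : ∀ x : ℝ, 0 ≤ deriv W x ∧ deriv W x ≤ L)
    (hCFL : 0 ≤ lam * L ∧ lam * L ≤ 1)
    (I : ℕ → ℝ)
    (hI : ∀ k : ℕ, I k = ∫ ζ in ((k : ℝ) * Δz)..(((k : ℝ) + 1) * Δz), (1/α) * Φ (ζ/α))
    (w : ℤ → ℝ) (hwB : ∃ M, ∀ i, |w i| ≤ M) :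
    ∀ c : ℝ, ∀ i : ℤ,
      |schemeStep I W lam w i - c| ≤
        |w i - c| + lam * ∑' k : ℕ, I k *
          (|W (w (i + (k : ℤ) + 1)) - W c| - |W (w (i + (k : ℤ))) - W c|) :=
  stmt_7_general Φ α Δz Δt lam L hα hΔz hΔt hlam hΦnonneg hΦmono hΦmass W hW hW' hCFL I hI w hwB
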